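/- arXiv:1412.2113 — 2 statements merged into one kernel-verified Lean document; each statement's English description precedes it below -/
import Mathlib

section
/- A collective matrix 𝒳 ∈ 𝔛 admits a joint factorization (of some finite dimension) if and only if 𝒳 belongs to the conic hull of the atom set 𝒜; that is, 𝔛̄ = cone(𝒜). -/
open scoped BigOperators
open MeasureTheory ProbabilityTheory Matrix

/-- The conic hull of a set: all finite nonnegative combinations of its elements. -/
def coneHull {E : Type*} [AddCommMonoid E] [Module ℝ E] (s : Set E) : Set E :=
  {x | ∃ (m : ℕ) (l : Fin m → ℝ) (A : Fin m → E),
    (∀ i, 0 ≤ l i) ∧ (∀ i, A i ∈ s) ∧ x = ∑ i, l i • A i}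

/-- Row span of a matrix. -/
def rowSpan {ι κ : Type*} (M : Matrix ι κ ℝ) : Submodule ℝ (κ → ℝ) :=
  Submodule.span ℝ (Set.range M)

/-- Column span of a matrix. -/
def colSpan {ι κ : Type*} (M : Matrix ι κ ℝ) : Submodule ℝ (ι → ℝ) :=
  Submodule.span ℝ (Set.range Mᵀ)

/-- Orthogonality of two subspaces of `κ → ℝ` with respect to the dot product. -/
def PerpSub {κ : Type*} [Fintype κ] (p q : Submodule ℝ (κ → ℝ)) : Prop :=
  ∀ x ∈ p, ∀ y ∈ q, x ⬝ᵥ y = 0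

/-- Spectral norm (largest singular value) of a square real matrix. -/
noncomputable def specNorm {ι : Type*} [Fintype ι] (A : Matrix ι ι ℝ) : ℝ :=
  ⨆ x : {x : ι → ℝ // ∑ i, (x i)^2 = 1}, Real.sqrt (∑ i, (A.mulVec x.1 i)^2)

/-- Largest eigenvalue of a symmetric real matrix (Rayleigh quotient formulation). -/
noncomputable def lambdaMax {ι : Type*} [Fintype ι] (A : Matrix ι ι ℝ) : ℝ :=
  ⨆ x : {x : ι → ℝ // ∑ i, (x i)^2 = 1}, x.1 ⬝ᵥ A.mulVec x.1

/-- A collective-matrix structure: `K` entity types with `n k` instances each,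
`V` views, view `v` relating entity types `r v` (rows) and `c v` (columns),
with at most one view per unordered pair of (distinct) entity types. -/
structure CMStruct where
  K : ℕ
  V : ℕ
  n : Fin K → ℕ
  r : Fin V → Fin K
  c : Fin V → Fin K
  ne : ∀ v, r v ≠ c v
  uniq : ∀ v w : Fin V, (r v = r w ∧ c v = c w) ∨ (r v = c w ∧ c v = r w) → v = w

namespace CMStruct

variable (S : CMStruct)

/-- The index set of size `N = ∑ k, n k`. -/
abbrev Idx := Σ k : Fin S.K, Fin (S.n k)

/-- `N = ∑ k, n k`. -/
abbrev N : ℕ := ∑ k, S.n k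

/-- The space `𝔛` of collective matrices. -/
abbrev Space := ∀ v : Fin S.V, Matrix (Fin (S.n (S.r v))) (Fin (S.n (S.c v))) ℝ

/-- Inner product `⟨𝒳,𝒴⟩ = ∑ v, tr (Xᵥᵀ Yᵥ)`. -/
noncomputable def inner (X Y : S.Space) : ℝ := ∑ v, Matrix.trace ((X v)ᵀ * Y v)

/-- Frobenius norm `‖𝒳‖_F = √⟨𝒳,𝒳⟩`. -/
noncomputable def frobNorm (X : S.Space) : ℝ := Real.sqrt (S.inner X X)

/-- `P_v` extracts the `(r v, c v)` block of an `N × N` matrix. -/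
def Pv (v : Fin S.V) (Z : Matrix S.Idx S.Idx ℝ) :
    Matrix (Fin (S.n (S.r v))) (Fin (S.n (S.c v))) ℝ :=
  Matrix.of fun i j => Z ⟨S.r v, i⟩ ⟨S.c v, j⟩

/-- Place a matrix as the `(k₁,k₂)` block of an `N × N` matrix (zero elsewhere). -/
def place (k₁ k₂ : Fin S.K) (M : Matrix (Fin (S.n k₁)) (Fin (S.n k₂)) ℝ) :
    Matrix S.Idx S.Idx ℝ :=
  Matrix.of fun a b => ∑ i, ∑ j, if a = ⟨k₁, i⟩ ∧ b = ⟨k₂, j⟩ then M i j else 0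

/-- Symmetric block representation `B(𝒳)`. -/
def B (X : S.Space) : Matrix S.Idx S.Idx ℝ :=
  ∑ v, (S.place (S.r v) (S.c v) (X v) + S.place (S.c v) (S.r v) (X v)ᵀ)

/-- Generators of the atom set: `[P_v(u uᵀ)]_v` for unit vectors `u`. -/
def atomGen : Set S.Space :=
  {A | ∃ u : S.Idx → ℝ, (∑ a, (u a)^2 = 1) ∧ A = fun v => S.Pv v (Matrix.vecMulVec u u)}

/-- The atom set `𝒜 = ext (conv {[P_v(u uᵀ)]_v : ‖u‖₂ = 1})`. -/
def atoms : Set S.Space := Set.extremePoints ℝ (convexHull ℝ S.atomGen)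

/-- `𝒳` admits a joint factorization of some finite dimension. -/
def HasJF (X : S.Space) : Prop :=
  ∃ (R : ℕ) (U : ∀ k : Fin S.K, Matrix (Fin (S.n k)) (Fin R) ℝ),
    ∀ v, X v = U (S.r v) * (U (S.c v))ᵀ

/-- `𝔛̄`: collective matrices admitting a joint factorization. -/
def Xbar : Set S.Space := {X | S.HasJF X}

/-- Collective-matrix rank: minimal dimension of a joint factorization. -/
noncomputable def cmRank (X : S.Space) : ℕ :=
  sInf {R | ∃ U : ∀ k : Fin S.K, Matrix (Fin (S.n k)) (Fin R) ℝ,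
    ∀ v, X v = U (S.r v) * (U (S.c v))ᵀ}

/-- The atomic norm: the gauge of `conv 𝒜`. -/
noncomputable def atomicNorm (X : S.Space) : ℝ := gauge (convexHull ℝ S.atoms) X

/-- The support function `‖𝒳‖_𝒜^* = sup {⟨𝒳,𝒜'⟩ : 𝒜' ∈ 𝒜}`. -/
noncomputable def dualNorm (X : S.Space) : ℝ := sSup {t | ∃ A ∈ S.atoms, t = S.inner X A}

/-- The set of "sign" collective matrices `ℰ(ℳ)`. -/
def signSet (M : S.Space) : Set S.Space :=
  {E | S.atomicNorm M = S.inner E M ∧ S.dualNorm E = 1}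

/-- The entity-relationship graph is bipartite (2-colorable). -/
def Bipartite : Prop := ∃ f : Fin S.K → Bool, ∀ v, f (S.r v) ≠ f (S.c v)

/-- The entity-relationship graph `𝒢`. -/
def graph : SimpleGraph (Fin S.K) :=
  SimpleGraph.fromEdgeSet {e | ∃ v, e = s(S.r v, S.c v)}

/-- The standard basis collective matrix `E^{(v,i,j)}`. -/
def stdBasis (v : Fin S.V) (i : Fin (S.n (S.r v))) (j : Fin (S.n (S.c v))) : S.Space :=
  fun w =>
    if h : v = w then
      Matrix.single (Fin.cast (congrArg (fun x => S.n (S.r x)) h) i)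
        (Fin.cast (congrArg (fun x => S.n (S.c x)) h) j) (1 : ℝ)
    else 0

/-- Index type of view entries `(v, i, j)`. -/
abbrev IdxE := Σ v : Fin S.V, Fin (S.n (S.r v)) × Fin (S.n (S.c v))

/-- Standard basis indexed by a view-entry index. -/
def stdE (e : S.IdxE) : S.Space := S.stdBasis e.1 e.2.1 e.2.2

/-- `‖𝒳‖_max = max_{(v,i,j)} |⟨𝒳, E^{(v,i,j)}⟩|`. -/
noncomputable def maxNorm (X : S.Space) : ℝ := ⨆ e : S.IdxE, |S.inner X (S.stdE e)|

/-- Column index type of the entity matrix `𝕏ₖ` (of cardinality `m k`). -/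
def EIdx (k : Fin S.K) : Type :=
  (Σ v : {v : Fin S.V // S.r v = k}, Fin (S.n (S.c v.1))) ⊕
  (Σ v : {v : Fin S.V // S.c v = k}, Fin (S.n (S.r v.1)))

instance (k : Fin S.K) : Fintype (S.EIdx k) := by unfold EIdx; infer_instance

/-- The entity matrix `𝕏ₖ`: horizontal concatenation of the `X v` with `r v = k` and
the `(X v)ᵀ` with `c v = k`. -/
def entityMat (X : S.Space) (k : Fin S.K) : Matrix (Fin (S.n k)) (S.EIdx k) ℝ :=
  Matrix.of fun i e =>
    match e with
    | Sum.inl ⟨v, j⟩ => X v.1 (Fin.cast (congrArg S.n v.2.symm) i) j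
    | Sum.inr ⟨v, j⟩ => X v.1 j (Fin.cast (congrArg S.n v.2.symm) i)

/-- `m k = ∑ v, (n_{c v}·1[r v = k] + n_{r v}·1[c v = k])`, the column dimension of `𝕏ₖ`. -/
def mcol (k : Fin S.K) : ℕ :=
  ∑ v, ((if S.r v = k then S.n (S.c v) else 0) + (if S.c v = k then S.n (S.r v) else 0))

/-- The generating set of the model subspace `T` (for ground truth `M`). -/
def Tset (M : S.Space) : Set S.Space :=
  {Y | S.HasJF Y ∧ ∀ v,
    rowSpan (S.entityMat Y (S.r v)) ≤ rowSpan (S.entityMat M (S.r v)) ∨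
    rowSpan (S.entityMat Y (S.c v)) ≤ rowSpan (S.entityMat M (S.c v))}

/-- The model subspace `T` (the affine hull of `Tset`, which contains `0`,
hence equals the linear span). -/
def Tsub (M : S.Space) : Submodule ℝ S.Space := Submodule.span ℝ (S.Tset M)

/-- `T^⊥`. -/
def Tperp (M : S.Space) : Set S.Space :=
  {Y | S.HasJF Y ∧ ∀ v,
    PerpSub (rowSpan (Y v)) (rowSpan (M v)) ∧ PerpSub (colSpan (Y v)) (colSpan (M v))}

/-- `T^⊥` as a submodule. -/
def TperpSub (M : S.Space) : Submodule ℝ S.Space := Submodule.span ℝ (S.Tperp M)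

/-- `P` is the orthogonal projection onto the subspace `T` of `𝔛`. -/
def IsOrthProj (T : Submodule ℝ S.Space) (P : S.Space → S.Space) : Prop :=
  (∀ X, P X ∈ T) ∧ (∀ X, ∀ Y ∈ T, S.inner (X - P X) Y = 0)

/-- Sampling probabilities `p(v,i,j)·|Ω|⁻¹` where
`p(v,i,j) = |Ω_{r v}|/(2 n_{r v} m_{r v}) + |Ω_{c v}|/(2 n_{c v} m_{c v})`. -/
noncomputable def pweight (w : Fin S.K → ℝ) (e : S.IdxE) : ℝ :=
  w (S.r e.1) / (2 * (S.n (S.r e.1) : ℝ) * (S.mcol (S.r e.1) : ℝ)) +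
  w (S.c e.1) / (2 * (S.n (S.c e.1) : ℝ) * (S.mcol (S.c e.1) : ℝ))

/-- The operator `R_Ω`. -/
noncomputable def Romega (w : Fin S.K → ℝ) {m : ℕ} (Ω : Fin m → S.IdxE) (X : S.Space) :
    S.Space :=
  ∑ s, (S.inner X (S.stdE (Ω s)) / S.pweight w (Ω s)) • S.stdE (Ω s)

/-- The sampling operator `P_Ω`. -/
noncomputable def Pomega {m : ℕ} (Ω : Fin m → S.IdxE) (X : S.Space) : S.Space :=
  ∑ s, S.inner X (S.stdE (Ω s)) • S.stdE (Ω s)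

/-- `κ_Ω(N) = 3|Ω| √(max_k |Ω_k|/(n_k m_k)) / (min_k |Ω_k|/(n_k m_k))`. -/
noncomputable def kappa (w : Fin S.K → ℝ) (m : ℕ) : ℝ :=
  3 * m * Real.sqrt (⨆ k, w k / ((S.n k : ℝ) * (S.mcol k : ℝ))) /
    (⨅ k, w k / ((S.n k : ℝ) * (S.mcol k : ℝ)))

instance : MeasurableSpace S.IdxE := ⊤

end CMStruct

/-!
A joint factorization `X_v = U_{r_v} U_{c_v}ᵀ` of dimension `R` splits, column by column of the
stacked factor `u_ρ = (U_k[:, ρ])_k`, as `X = ∑_ρ [P_v(u_ρ u_ρᵀ)]_v`, and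
`[P_v(u uᵀ)]_v = ‖u‖² [P_v(û ûᵀ)]_v` with `û` a unit vector; conversely every generator
`[P_v(u uᵀ)]_v` has the rank-one joint factorization `U_k = u|_k`. Hence `𝔛̄` is the conic hull of
the generators. They form a compact set, the image of the unit sphere, so their convex hull is
compact (Carathéodory) and, by Minkowski's theorem, is the convex hull of its extreme points `𝒜`.
As `𝒜` consists of generators, both sets have the same conic hull.

Minkowski's theorem is proved by induction on the dimension of the affine span: every point lies on
a maximal chord, and each endpoint of that chord is supported by a functional which is not constant
on the set, hence lies on an exposed face of smaller dimension.
-/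

open Set Module Topology

section ConeHull

variable {E : Type*} [AddCommMonoid E] [Module ℝ E] {s t C : Set E}

theorem zero_mem_coneHull (s : Set E) : (0 : E) ∈ coneHull s :=
  ⟨0, Fin.elim0, Fin.elim0, fun i => i.elim0, fun i => i.elim0, by simp⟩

theorem subset_coneHull : s ⊆ coneHull s := fun x hx =>
  ⟨1, fun _ => 1, fun _ => x, fun _ => zero_le_one, fun _ => hx, by simp⟩

theorem add_mem_coneHull {x y : E} (hx : x ∈ coneHull s) (hy : y ∈ coneHull s) :
    x + y ∈ coneHull s := by
  obtain ⟨m, l, A, hl, hA, rfl⟩ := hx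
  obtain ⟨m', l', A', hl', hA', rfl⟩ := hy
  refine ⟨m + m', Fin.append l l', Fin.append A A', fun i => ?_, fun i => ?_, ?_⟩
  · exact Fin.addCases (by simpa using hl) (by simpa using hl') i
  · exact Fin.addCases (by simpa using hA) (by simpa using hA') i
  · simp [Fin.sum_univ_add]

theorem smul_mem_coneHull {c : ℝ} (hc : 0 ≤ c) {x : E} (hx : x ∈ coneHull s) :
    c • x ∈ coneHull s := by
  obtain ⟨m, l, A, hl, hA, rfl⟩ := hx
  exact ⟨m, fun i => c * l i, A, fun i => mul_nonneg hc (hl i), hA, by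
    simp [Finset.smul_sum, smul_smul]⟩

theorem sum_mem_coneHull {ι : Type*} {u : Finset ι} {f : ι → E}
    (h : ∀ i ∈ u, f i ∈ coneHull s) : ∑ i ∈ u, f i ∈ coneHull s :=
  Finset.sum_induction f (· ∈ coneHull s) (fun _ _ => add_mem_coneHull) (zero_mem_coneHull s) h

theorem coneHull_min (hsC : s ⊆ C) (h0 : (0 : E) ∈ C) (hadd : ∀ x ∈ C, ∀ y ∈ C, x + y ∈ C)
    (hsmul : ∀ c : ℝ, 0 ≤ c → ∀ x ∈ C, c • x ∈ C) : coneHull s ⊆ C := by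
  rintro _ ⟨m, l, A, hl, hA, rfl⟩
  exact Finset.sum_induction _ (· ∈ C) (fun x y hx hy => hadd x hx y hy) h0
    fun i _ => hsmul _ (hl i) _ (hsC (hA i))

theorem coneHull_subset_coneHull (h : s ⊆ coneHull t) : coneHull s ⊆ coneHull t :=
  coneHull_min h (zero_mem_coneHull t) (fun _ hx _ hy => add_mem_coneHull hx hy)
    fun _ hc _ hx => smul_mem_coneHull hc hx

theorem convexHull_subset_coneHull (s : Set E) : convexHull ℝ s ⊆ coneHull s :=
  convexHull_min subset_coneHull fun _ hx _ hy _ _ ha hb _ =>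
    add_mem_coneHull (smul_mem_coneHull ha hx) (smul_mem_coneHull hb hy)

end ConeHull

theorem Function.extend_mem {α β γ : Type*} {f : α → β} {g : α → γ} {g' : β → γ} {t : Set γ}
    (hg : ∀ a, g a ∈ t) (hg' : ∀ b, g' b ∈ t) (b : β) : Function.extend f g g' b ∈ t := by
  rcases range_extend_subset f g g' ⟨b, rfl⟩ with ⟨a, ha⟩ | ⟨b', -, hb'⟩
  exacts [ha ▸ hg a, hb' ▸ hg' b']

section Caratheodory

variable {E : Type*} [AddCommGroup E] [Module ℝ E] [FiniteDimensional ℝ E] {s : Set E}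

/-- Carathéodory's theorem, padded with zero weights on `z₀` to exactly `finrank ℝ E + 1` points. -/
theorem exists_stdSimplex_fin_of_mem_convexHull {z₀ x : E} (hz₀ : z₀ ∈ s)
    (hx : x ∈ convexHull ℝ s) :
    ∃ w ∈ stdSimplex ℝ (Fin (finrank ℝ E + 1)), ∃ z : Fin (finrank ℝ E + 1) → E,
      (∀ j, z j ∈ s) ∧ ∑ j, w j • z j = x := by
  classical
  obtain ⟨ι, _, z, w, hzs, hai, hw, hw1, rfl⟩ := eq_pos_convex_span_of_mem_convexHull hx
  have hcard : Fintype.card ι ≤ Fintype.card (Fin (finrank ℝ E + 1)) := by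
    simpa using hai.card_le_finrank_succ.trans (Nat.succ_le_succ (Submodule.finrank_le _))
  obtain ⟨e⟩ := Function.Embedding.nonempty_of_card_le hcard
  have hzero : ∀ j ∉ Set.range e, Function.extend e w 0 j = 0 := fun j hj =>
    Function.extend_apply' _ _ _ (by simpa using hj)
  refine ⟨Function.extend e w 0,
    ⟨Function.extend_mem (g' := 0) (t := Ici 0) (fun i => mem_Ici.2 (hw i).le) fun _ =>
      self_mem_Ici, ?_⟩,
    Function.extend e z fun _ => z₀, Function.extend_mem (fun i => hzs ⟨i, rfl⟩) fun _ => hz₀, ?_⟩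
  · rw [← hw1]
    exact (Fintype.sum_of_injective e e.injective _ _ hzero
      fun i => (e.injective.extend_apply _ _ i).symm).symm
  · refine (Fintype.sum_of_injective e e.injective _ _ (fun j hj => by simp [hzero j hj])
      fun i => ?_).symm
    simp [e.injective.extend_apply]

end Caratheodory

theorem Convex.exists_supporting_of_notMem_interior {F : Type*} [AddCommGroup F] [Module ℝ F]
    [TopologicalSpace F] [IsTopologicalAddGroup F] [ContinuousSMul ℝ F] {A : Set F}
    (hA : Convex ℝ A) (hint : (interior A).Nonempty) {x : F} (hx : x ∉ interior A) :
    ∃ g : StrongDual ℝ F, (∀ a ∈ A, g a ≤ g x) ∧ ∃ a ∈ A, g a < g x := by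
  obtain ⟨g, hg⟩ := geometric_hahn_banach_open_point hA.interior isOpen_interior hx
  have hclosure : closure (interior A) ⊆ {a | g a ≤ g x} :=
    closure_minimal (fun a ha => (hg a ha).le) (isClosed_le g.continuous continuous_const)
  refine ⟨g, fun a ha => hclosure ?_, hint.some, interior_subset hint.some_mem,
    hg _ hint.some_mem⟩
  rw [hA.closure_interior_eq_closure_of_nonempty_interior hint]
  exact subset_closure ha

section Minkowski

variable {E : Type*} [NormedAddCommGroup E] [NormedSpace ℝ E]

theorem isCompact_convexHull [FiniteDimensional ℝ E] {s : Set E} (hs : IsCompact s) :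
    IsCompact (convexHull ℝ s) := by
  rcases s.eq_empty_or_nonempty with rfl | ⟨z₀, hz₀⟩
  · simp
  let f : (Fin (finrank ℝ E + 1) → ℝ) × (Fin (finrank ℝ E + 1) → E) → E :=
    fun p => ∑ j, p.1 j • p.2 j
  have hf : convexHull ℝ s = f '' (stdSimplex ℝ _ ×ˢ univ.pi fun _ => s) := by
    refine Subset.antisymm (fun x hx => ?_) ?_
    · obtain ⟨w, hw, z, hz, rfl⟩ := exists_stdSimplex_fin_of_mem_convexHull hz₀ hx
      exact ⟨(w, z), ⟨hw, fun j _ => hz j⟩, rfl⟩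
    · rintro _ ⟨⟨w, z⟩, ⟨hw, hz⟩, rfl⟩
      exact (convex_convexHull ℝ s).sum_mem (fun j _ => hw.1 j) hw.2
        fun j _ => subset_convexHull ℝ s (hz j (mem_univ j))
  rw [hf]
  exact ((isCompact_stdSimplex ℝ _).prod (isCompact_univ_pi fun _ => hs)).image (by fun_prop)

theorem Convex.exists_supporting_of_forall_add_smul_notMem [FiniteDimensional ℝ E] {s : Set E}
    (hs : Convex ℝ s) {q v : E} (hq : q ∈ s) (hv : v ∈ vectorSpan ℝ s)
    (hray : ∀ t : ℝ, 0 < t → q + t • v ∉ s) :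
    ∃ l : StrongDual ℝ E, (∀ y ∈ s, l y ≤ l q) ∧ ∃ y ∈ s, l y < l q := by
  -- `W` is `vectorSpan ℝ s`, written so that `Submodule.span_span_coe_preimage` applies to it
  let W := Submodule.span ℝ ((· -ᵥ q) '' s)
  rw [vectorSpan_eq_span_vsub_set_right ℝ hq] at hv
  let A : Set W := {w | q + w ∈ s}
  have hA : Convex ℝ A := (hs.translate_preimage_right q).linear_preimage W.subtype
  have hA0 : (0 : W) ∈ A := by simpa [A] using hq
  have hspan : affineSpan ℝ A = ⊤ := by
    rw [AffineSubspace.affineSpan_eq_top_iff_vectorSpan_eq_top_of_nonempty ℝ W W ⟨0, hA0⟩,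
      vectorSpan_eq_span_vsub_set_right ℝ hA0]
    refine top_unique (Submodule.span_span_coe_preimage.symm.le.trans (Submodule.span_mono ?_))
    rintro w ⟨y, hy, hw⟩
    exact ⟨w, by simpa [A, ← hw] using hy, by simp⟩
  have h0 : (0 : W) ∉ interior A := by
    intro h0
    have hlim : Filter.Tendsto (fun t : ℝ => t • (⟨v, hv⟩ : W)) (𝓝[>] 0) (𝓝 0) :=
      ((continuous_id.smul continuous_const).tendsto' 0 0 (zero_smul _ _)).mono_left
        nhdsWithin_le_nhds
    obtain ⟨t, htA, ht⟩ :=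
      ((hlim.eventually (mem_interior_iff_mem_nhds.1 h0)).and self_mem_nhdsWithin).exists
    exact hray t ht htA
  obtain ⟨g, hgA, a, haA, hga⟩ := hA.exists_supporting_of_notMem_interior
    (hA.interior_nonempty_iff_affineSpan_eq_top.2 hspan) h0
  obtain ⟨l, hl, -⟩ := exists_extension_norm_eq W g
  have hsW : ∀ y ∈ s, y - q ∈ W := fun y hy => Submodule.subset_span ⟨y, hy, rfl⟩
  have hly : ∀ y (hy : y ∈ s), l y = g ⟨y - q, hsW y hy⟩ + l q := by
    intro y hy
    rw [← hl, ← map_add, sub_add_cancel]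
  refine ⟨l, fun y hy => ?_, q + a, haA, ?_⟩
  · rw [hly y hy]
    linarith [hgA ⟨y - q, hsW y hy⟩ (show q + (y - q) ∈ s by simpa using hy), g.map_zero]
  · rw [map_add, hl]
    linarith [g.map_zero]

theorem finrank_vectorSpan_toExposed_lt [FiniteDimensional ℝ E] {s : Set E} (l : StrongDual ℝ E)
    {y q : E} (hy : y ∈ s) (hq : q ∈ s) (hlt : l y < l q) :
    finrank ℝ (vectorSpan ℝ (l.toExposed s)) < finrank ℝ (vectorSpan ℝ s) := by
  have hker : vectorSpan ℝ (l.toExposed s) ≤ LinearMap.ker (l : E →ₗ[ℝ] ℝ) := by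
    refine Submodule.span_le.2 ?_
    rintro _ ⟨a, ha, b, hb, rfl⟩
    simp [vsub_eq_sub, (ha.2 b hb.1).antisymm (hb.2 a ha.1)]
  refine Submodule.finrank_lt_finrank_of_lt (SetLike.lt_iff_le_and_exists.2
    ⟨vectorSpan_mono ℝ fun _ h => h.1, y - q, vsub_mem_vectorSpan ℝ hy hq, fun h => ?_⟩)
  have := hker h
  simp only [LinearMap.mem_ker, ContinuousLinearMap.coe_coe, map_sub, sub_eq_zero] at this
  exact hlt.ne this

theorem IsCompact.exists_mem_segment_of_forall_add_smul_notMem {s : Set E} (hs : IsCompact s)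
    {x v : E} (hx : x ∈ s) (hv : v ≠ 0) :
    ∃ p ∈ s, ∃ q ∈ s, x ∈ segment ℝ p q ∧ (∀ t : ℝ, 0 < t → p + t • -v ∉ s) ∧
      ∀ t : ℝ, 0 < t → q + t • v ∉ s := by
  let f : ℝ →ᵃ[ℝ] E := AffineMap.lineMap x (x + v)
  have hf : ∀ t, f t = x + t • v := fun t => by
    simp [f, AffineMap.lineMap_apply, add_comm]
  have hI : IsCompact (f ⁻¹' s) := by
    have : Topology.IsClosedEmbedding f := by
      rw [show ⇑f = (x + ·) ∘ (· • v) from funext hf]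
      exact (Homeomorph.addLeft x).isClosedEmbedding.comp (isClosedEmbedding_smul_left hv)
    exact this.isCompact_preimage hs
  have h0 : (0 : ℝ) ∈ f ⁻¹' s := by simpa [hf] using hx
  have ha := hI.sInf_mem ⟨0, h0⟩
  have hb := hI.sSup_mem ⟨0, h0⟩
  refine ⟨f (sInf (f ⁻¹' s)), ha, f (sSup (f ⁻¹' s)), hb, ?_, fun t ht h => ?_, fun t ht h => ?_⟩
  · rw [← image_segment, segment_eq_Icc ((csInf_le hI.bddBelow h0).trans (le_csSup hI.bddAbove h0))]
    exact ⟨0, ⟨csInf_le hI.bddBelow h0, le_csSup hI.bddAbove h0⟩, by simp [hf]⟩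
  · have : sInf (f ⁻¹' s) - t ∈ f ⁻¹' s := by
      simpa [hf, sub_eq_add_neg, add_smul, add_assoc] using h
    linarith [csInf_le hI.bddBelow this]
  · have : sSup (f ⁻¹' s) + t ∈ f ⁻¹' s := by simpa [hf, add_smul, add_assoc] using h
    linarith [le_csSup hI.bddAbove this]

theorem IsCompact.subset_convexHull_extremePoints [FiniteDimensional ℝ E] {s : Set E}
    (hs : IsCompact s) (hconv : Convex ℝ s) : s ⊆ convexHull ℝ (s.extremePoints ℝ) := by
  induction hn : finrank ℝ (vectorSpan ℝ s) using Nat.strong_induction_on generalizing s with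
  | _ n IH =>
  intro x hx
  by_cases hsing : ∀ y ∈ s, y = x
  · exact subset_convexHull ℝ _
      (mem_extremePoints.2 ⟨hx, fun y₁ h₁ y₂ h₂ _ => ⟨hsing y₁ h₁, hsing y₂ h₂⟩⟩)
  push Not at hsing
  obtain ⟨y, hy, hyx⟩ := hsing
  -- such a point lies on the proper exposed face cut out by its supporting functional
  have hend : ∀ q ∈ s, ∀ v ∈ vectorSpan ℝ s, (∀ t : ℝ, 0 < t → q + t • v ∉ s) →
      q ∈ convexHull ℝ (s.extremePoints ℝ) := by
    intro q hq v hv hray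
    obtain ⟨l, hle, z, hz, hlt⟩ := hconv.exists_supporting_of_forall_add_smul_notMem hq hv hray
    have hF : IsExposed ℝ s (l.toExposed s) := ContinuousLinearMap.toExposed.isExposed
    exact convexHull_mono hF.isExtreme.extremePoints_subset_extremePoints
      (IH _ (hn ▸ finrank_vectorSpan_toExposed_lt l hz hq hlt) (hF.isCompact hs)
        (hF.convex hconv) rfl ⟨hq, hle⟩)
  have hv : y - x ∈ vectorSpan ℝ s := vsub_mem_vectorSpan ℝ hy hx
  obtain ⟨p, hp, q, hq, hxpq, hpray, hqray⟩ :=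
    hs.exists_mem_segment_of_forall_add_smul_notMem hx (sub_ne_zero.2 hyx)
  exact (convex_convexHull ℝ _).segment_subset (hend p hp _ (neg_mem hv) hpray)
    (hend q hq _ hv hqray) hxpq

theorem coneHull_extremePoints_convexHull [FiniteDimensional ℝ E] {s : Set E}
    (hs : IsCompact s) : coneHull ((convexHull ℝ s).extremePoints ℝ) = coneHull s :=
  (coneHull_subset_coneHull (extremePoints_convexHull_subset.trans subset_coneHull)).antisymm
    (coneHull_subset_coneHull ((subset_convexHull ℝ s).trans
      (((isCompact_convexHull hs).subset_convexHull_extremePoints (convex_convexHull ℝ s)).trans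
        (convexHull_subset_coneHull _))))

end Minkowski

theorem isCompact_setOf_sum_sq_eq_one (ι : Type*) [Fintype ι] :
    IsCompact {u : ι → ℝ | ∑ i, u i ^ 2 = 1} := by
  have : {u : ι → ℝ | ∑ i, u i ^ 2 = 1} =
      (PiLp.continuousLinearEquiv 2 ℝ fun _ : ι => ℝ).symm ⁻¹' Metric.sphere 0 1 := by
    ext u
    simp [EuclideanSpace.norm_eq, Real.sqrt_eq_one]
  rw [this]
  exact (PiLp.continuousLinearEquiv 2 ℝ _).symm.toHomeomorph.isCompact_preimage.2
    (isCompact_sphere 0 1)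

namespace CMStruct

section

variable {S : CMStruct}

theorem HasJF.add {X Y : S.Space} (hX : S.HasJF X) (hY : S.HasJF Y) :
    S.HasJF (X + Y) := by
  obtain ⟨R₁, U₁, hU₁⟩ := hX
  obtain ⟨R₂, U₂, hU₂⟩ := hY
  refine ⟨R₁ + R₂, fun k => Matrix.of fun i => Fin.append (U₁ k i) (U₂ k i), fun v => ?_⟩
  ext i j
  simp [hU₁ v, hU₂ v, Matrix.mul_apply, Fin.sum_univ_add]

theorem HasJF.smul {X : S.Space} (hX : S.HasJF X) {c : ℝ} (hc : 0 ≤ c) :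
    S.HasJF (c • X) := by
  obtain ⟨R, U, hU⟩ := hX
  refine ⟨R, fun k => √c • U k, fun v => ?_⟩
  rw [Pi.smul_apply, hU v, Matrix.transpose_smul, Matrix.smul_mul, Matrix.mul_smul, smul_smul,
    Real.mul_self_sqrt hc]

end

variable (S : CMStruct)

theorem hasJF_zero : S.HasJF 0 :=
  ⟨0, fun _ => 0, fun v => by ext; simp⟩

def projOuter (u : S.Idx → ℝ) : S.Space := fun v => S.Pv v (vecMulVec u u)

theorem projOuter_smul (c : ℝ) (u : S.Idx → ℝ) : S.projOuter (c • u) = c ^ 2 • S.projOuter u := by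
  ext v i j
  simp only [projOuter, Pv, vecMulVec_apply, Pi.smul_apply, smul_eq_mul, of_apply,
    Matrix.smul_apply]
  ring

theorem atomGen_eq_image : S.atomGen = S.projOuter '' {u | ∑ a, u a ^ 2 = 1} := by
  ext A
  constructor
  · rintro ⟨u, hu, rfl⟩; exact ⟨u, hu, rfl⟩
  · rintro ⟨u, hu, rfl⟩; exact ⟨u, hu, rfl⟩

theorem projOuter_mem_coneHull_atomGen (u : S.Idx → ℝ) : S.projOuter u ∈ coneHull S.atomGen := by
  by_cases hu : ∑ a, u a ^ 2 = 0
  · have : u = 0 := funext fun a =>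
      pow_eq_zero_iff two_ne_zero |>.1 <| (Finset.sum_eq_zero_iff_of_nonneg fun b _ =>
        sq_nonneg (u b)).1 hu a (Finset.mem_univ a)
    rw [show u = (0 : ℝ) • u by simp [this], projOuter_smul, zero_pow two_ne_zero, zero_smul]
    exact zero_mem_coneHull S.atomGen
  have hsq : √(∑ a, u a ^ 2) ^ 2 = ∑ a, u a ^ 2 := Real.sq_sqrt (by positivity)
  set c := √(∑ a, u a ^ 2)
  have hc : c ≠ 0 := by positivity
  have hunit : ∑ a, (c⁻¹ • u) a ^ 2 = 1 := by
    simp [mul_pow, ← Finset.mul_sum, hsq, hu]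
  rw [show u = c • c⁻¹ • u by rw [smul_smul, mul_inv_cancel₀ hc, one_smul], projOuter_smul]
  exact smul_mem_coneHull (sq_nonneg c) (subset_coneHull ⟨_, hunit, rfl⟩)

theorem hasJF_projOuter (u : S.Idx → ℝ) : S.HasJF (S.projOuter u) :=
  ⟨1, fun k => Matrix.of fun i _ => u ⟨k, i⟩, fun v => by
    ext i j
    simp [projOuter, Pv, Matrix.mul_apply, vecMulVec_apply]⟩

theorem eq_sum_projOuter {R : ℕ} {X : S.Space} (U : ∀ k, Matrix (Fin (S.n k)) (Fin R) ℝ)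
    (hU : ∀ v, X v = U (S.r v) * (U (S.c v))ᵀ) :
    X = ∑ ρ, S.projOuter fun a => U a.1 a.2 ρ := by
  ext v i j
  simp [hU v, projOuter, Pv, Matrix.mul_apply, vecMulVec_apply, Finset.sum_apply,
    Matrix.sum_apply]

theorem xbar_eq_coneHull_atomGen : S.Xbar = coneHull S.atomGen := by
  refine Subset.antisymm ?_ ?_
  · rintro X ⟨R, U, hU⟩
    rw [S.eq_sum_projOuter U hU]
    exact sum_mem_coneHull fun ρ _ => S.projOuter_mem_coneHull_atomGen _
  · refine coneHull_min ?_ S.hasJF_zero (fun _ hX _ hY => hX.add hY) fun _ hc _ hX => hX.smul hc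
    rintro _ ⟨u, -, rfl⟩
    exact S.hasJF_projOuter u

section

attribute [local instance] Matrix.normedAddCommGroup Matrix.normedSpace

theorem isCompact_atomGen : IsCompact S.atomGen := by
  rw [atomGen_eq_image]
  exact (isCompact_setOf_sum_sq_eq_one S.Idx).image
    (continuous_pi fun v => continuous_matrix fun i j =>
      (continuous_apply _).mul (continuous_apply _))

theorem coneHull_atoms : coneHull S.atoms = coneHull S.atomGen :=
  coneHull_extremePoints_convexHull S.isCompact_atomGen

end

end CMStruct

/-- A collective matrix admits a joint factorization iff it lies in the
conic hull of the atom set: `𝔛̄ = cone 𝒜`. -/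
theorem collective_matrix_jointFactorization_iff_coneHull (S : CMStruct) :
    S.Xbar = coneHull S.atoms := by
  rw [S.coneHull_atoms, S.xbar_eq_coneHull_atomGen]
end

section
/- If the entity-relationship graph 𝒢 is bipartite, then every collective matrix admits a finite-dimensional joint factorization (𝔛 = 𝔛̄), and the atom set 𝒜 is centrally symmetric: 𝒜' ∈ 𝒜 if and only if −𝒜' ∈ 𝒜. -/
open scoped BigOperators
open MeasureTheory ProbabilityTheory Matrix

/-! Stacking the factors `U_k` of a joint factorization into one matrix `Z`, the collective
matrix is read off the blocks of the Gram matrix `Z Zᵀ`. A single view `M` at `(r, c)` is the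
Gram pattern of `U_r = M`, `U_c = 1` and `U_k = 0` otherwise: since a view is determined by its
two endpoints, no other view sees it. Concatenating these factors over all views factors an
arbitrary collective matrix.

For the atoms, flip the sign of `u` on one colour class of a 2-colouring of `𝒢`: every view
of `P(u uᵀ)` joins the two classes, so it changes sign. Hence the generating set is centrally
symmetric, and so are its convex hull and the extreme points of that hull. -/

theorem extremePoints_neg {𝕜 E : Type*} [Ring 𝕜] [PartialOrder 𝕜] [IsOrderedRing 𝕜]
    [AddCommGroup E] [Module 𝕜 E] (s : Set E) :
    Set.extremePoints 𝕜 (-s) = -Set.extremePoints 𝕜 s := by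
  simpa [Set.image_neg_eq_neg] using
    (image_extremePoints (LinearEquiv.neg 𝕜 : E ≃ₗ[𝕜] E) s).symm

namespace CMStruct

variable (S : CMStruct)

theorem eq_of_endpoints {v w : Fin S.V} (hr : S.r w = S.r v ∨ S.r w = S.c v)
    (hc : S.c w = S.r v ∨ S.c w = S.c v) : w = v := by
  apply S.uniq w v
  rcases hr with hr | hr <;> rcases hc with hc | hc
  · exact absurd (hr.trans hc.symm) (S.ne w)
  · exact Or.inl ⟨hr, hc⟩
  · exact Or.inr ⟨hr, hc⟩
  · exact absurd (hr.trans hc.symm) (S.ne w)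

theorem hasJF_Pv_mul_transpose {ι : Type*} [Fintype ι] (Z : Matrix S.Idx ι ℝ) :
    S.HasJF fun w => S.Pv w (Z * Zᵀ) := by
  let e := Fintype.equivFin ι
  refine ⟨Fintype.card ι, fun k => Matrix.of fun a t => Z ⟨k, a⟩ (e.symm t), fun w => ?_⟩
  ext i j
  simp only [Pv, Matrix.mul_apply, Matrix.of_apply, Matrix.transpose_apply]
  exact (e.symm.sum_comp fun s => Z ⟨S.r w, i⟩ s * Z ⟨S.c w, j⟩ s).symm

theorem Pv_sum {ι : Type*} [Fintype ι] (w : Fin S.V) (Z : ι → Matrix S.Idx S.Idx ℝ) :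
    S.Pv w (∑ i, Z i) = ∑ i, S.Pv w (Z i) := by
  ext a b
  simp [Pv, Matrix.sum_apply]

def viewFactor (v : Fin S.V) (M : Matrix (Fin (S.n (S.r v))) (Fin (S.n (S.c v))) ℝ) :
    Matrix S.Idx (Fin (S.n (S.c v))) ℝ :=
  Matrix.of fun p t =>
    if h : p.1 = S.r v then M (Fin.cast (congrArg S.n h) p.2) t
    else if p = ⟨S.c v, t⟩ then 1 else 0

theorem viewFactor_eq_zero {v : Fin S.V} (M : Matrix (Fin (S.n (S.r v))) (Fin (S.n (S.c v))) ℝ)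
    {p : S.Idx} (hp : ¬(p.1 = S.r v ∨ p.1 = S.c v)) (t : Fin (S.n (S.c v))) :
    S.viewFactor v M p t = 0 := by
  rw [not_or] at hp
  simp only [viewFactor, Matrix.of_apply, dif_neg hp.1]
  exact if_neg fun h => hp.2 (congrArg Sigma.fst h)

theorem Pv_viewFactor_mul_transpose (v w : Fin S.V)
    (M : Matrix (Fin (S.n (S.r v))) (Fin (S.n (S.c v))) ℝ) :
    S.Pv w (S.viewFactor v M * (S.viewFactor v M)ᵀ) = (Pi.single v M : S.Space) w := by
  by_cases hwv : w = v
  · subst hwv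
    have hcr : S.c w ≠ S.r w := (S.ne w).symm
    ext i j
    simp [Pv, viewFactor, Matrix.mul_apply, hcr]
  · rw [Pi.single_eq_of_ne hwv]
    ext i j
    simp only [Pv, Matrix.of_apply, Matrix.mul_apply, Matrix.zero_apply]
    refine Finset.sum_eq_zero fun t _ => ?_
    by_cases hr : S.r w = S.r v ∨ S.r w = S.c v
    · have hc : ¬(S.c w = S.r v ∨ S.c w = S.c v) := fun hc => hwv (S.eq_of_endpoints hr hc)
      simp [Matrix.transpose_apply, S.viewFactor_eq_zero M (p := ⟨S.c w, j⟩) hc]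
    · simp [S.viewFactor_eq_zero M (p := ⟨S.r w, i⟩) hr]

theorem hasJF (X : S.Space) : S.HasJF X := by
  let Z : Matrix S.Idx (Σ v, Fin (S.n (S.c v))) ℝ :=
    Matrix.of fun p e => S.viewFactor e.1 (X e.1) p e.2
  have hZ : Z * Zᵀ = ∑ v, S.viewFactor v (X v) * (S.viewFactor v (X v))ᵀ := by
    ext p q
    simp [Z, Matrix.mul_apply, Matrix.sum_apply, Fintype.sum_sigma]
  have hX : (fun w => S.Pv w (Z * Zᵀ)) = X := by
    funext w
    simp only [hZ, Pv_sum, Pv_viewFactor_mul_transpose, ← Finset.sum_apply,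
      Finset.univ_sum_single]
  exact hX ▸ S.hasJF_Pv_mul_transpose Z

theorem Xbar_eq_univ : S.Xbar = Set.univ :=
  Set.eq_univ_of_forall S.hasJF

theorem neg_mem_atomGen {A : S.Space} (hbip : S.Bipartite) (hA : A ∈ S.atomGen) :
    -A ∈ S.atomGen := by
  obtain ⟨f, hf⟩ := hbip
  obtain ⟨u, hu, rfl⟩ := hA
  let σ : S.Idx → ℝ := fun p => if f p.1 then -1 else 1
  have hσ_sq (p : S.Idx) : σ p ^ 2 = 1 := by
    by_cases h : f p.1 <;> simp [σ, h]
  have hσ_view (v : Fin S.V) (i : Fin (S.n (S.r v))) (j : Fin (S.n (S.c v))) :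
      σ ⟨S.r v, i⟩ * σ ⟨S.c v, j⟩ = -1 := by
    have := hf v
    cases h : f (S.r v) <;> cases h' : f (S.c v) <;> simp_all [σ]
  refine ⟨fun p => σ p * u p, ?_, ?_⟩
  · simpa [mul_pow, hσ_sq] using hu
  · funext v
    ext i j
    simp only [Pi.neg_apply, Matrix.neg_apply, Pv, Matrix.vecMulVec_apply, Matrix.of_apply]
    linear_combination -(u ⟨S.r v, i⟩ * u ⟨S.c v, j⟩) * hσ_view v i j

theorem neg_atomGen (hbip : S.Bipartite) : -S.atomGen = S.atomGen :=
  (Set.neg_subset.mpr fun _ hA => S.neg_mem_atomGen hbip hA).antisymm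
    fun _ hA => S.neg_mem_atomGen hbip hA

theorem neg_atoms (hbip : S.Bipartite) : -S.atoms = S.atoms := by
  rw [atoms, ← extremePoints_neg, ← convexHull_neg, S.neg_atomGen hbip]

end CMStruct

/-- If `𝒢` is bipartite then `𝔛 = 𝔛̄` and the atom set is
centrally symmetric. -/
theorem bipartite_Xbar_univ_and_atoms_symm (S : CMStruct) (hbip : S.Bipartite) :
    S.Xbar = Set.univ ∧ ∀ A : S.Space, A ∈ S.atoms ↔ -A ∈ S.atoms := by
  refine ⟨S.Xbar_eq_univ, fun A => ?_⟩
  rw [← Set.mem_neg, S.neg_atoms hbip]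
end
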